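/- Convolution property of the dual photography transform: for f ∈ S(ℝ²ⁿ) and g ∈ S(ℝ × ℝⁿ) (with suitable integrability in α), (P*g) * f = P*(g * Pf), where P*g(x,u) = ∫_ℝ g(α, αx + (1-α)u) dα, the convolution on the left is over ℝ²ⁿ, and the convolution inside P* is over the second (ℝⁿ) variable: (g * Pf)(α, x̄) = ∫_{ℝⁿ} g(α, x̄ - x̄') Pf(α, x̄') dx̄'. -/

import Mathlib

open MeasureTheory SchwartzMap FourierTransform Real

noncomputable section

abbrev En (n : ℕ) := EuclideanSpace ℝ (Fin n)
abbrev E2n (n : ℕ) := WithLp 2 (En n × En n)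

instance (n : ℕ) : MeasureSpace (E2n n) :=
  ⟨Measure.map (WithLp.toLp 2) (volume : Measure (En n × En n))⟩
instance (n : ℕ) : BorelSpace (E2n n) := inferInstance

/-- The photography transform `P`. -/
def photo (n : ℕ) (f : E2n n → ℂ) (α : ℝ) (x : En n) : ℂ :=
  (|α| ^ n)⁻¹ • ∫ u : En n, f (WithLp.toLp 2 (α⁻¹ • x + (1 - α⁻¹) • u, u))
/-- The dual photography transform `P*`. -/
def photoDual (n : ℕ) (h : ℝ → En n → ℂ) : E2n n → ℂ :=
  fun z => ∫ α : ℝ, h α (α • z.fst + (1 - α) • z.snd)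

/-! Both sides are integrals over `α` of the same family of convolutions: by Fubini in `(w, α)`,
legitimate since `g` decays in `α` and `f` is integrable, it suffices that for `α ≠ 0`
`∫ F (α w₁ + (1 - α) w₂) f w dw = ∫ F y Pf(α, y) dy`, i.e. `Pf(α, ·)` is the push-forward of `f`
under `w ↦ α w₁ + (1 - α) w₂`. This comes from the substitution `y = α w₁ + (1 - α) w₂` in the
`w₁`-integral (Jacobian `|α|⁻ⁿ`) followed by exchanging the `y`- and `w₂`-integrals, applied to
`F = g (α, α z₁ + (1 - α) z₂ - ·)`. The value `α = 0` is a null set. -/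

theorem volume_E2n_eq (n : ℕ) :
    (volume : Measure (E2n n)) = @volume (E2n n) measureSpaceOfInnerProductSpace :=
  (WithLp.volume_preserving_toLp (En n) (En n)).map_eq

instance (n : ℕ) : (volume : Measure (E2n n)).IsAddHaarMeasure := by
  rw [volume_E2n_eq]
  infer_instance

theorem measurePreserving_toLp_E2n (n : ℕ) :
    MeasurePreserving (WithLp.toLp 2 : En n × En n → E2n n) :=
  ⟨(MeasurableEquiv.toLp 2 _).measurable, rfl⟩

theorem integral_comp_smul_add {E F : Type*} [NormedAddCommGroup E] [NormedSpace ℝ E]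
    [MeasurableSpace E] [BorelSpace E] [FiniteDimensional ℝ E] (μ : Measure E)
    [μ.IsAddHaarMeasure] [NormedAddCommGroup F] [NormedSpace ℝ F] (f : E → F) (R : ℝ) (v : E) :
    ∫ x, f (R • x + v) ∂μ = |(R ^ Module.finrank ℝ E)⁻¹| • ∫ x, f x ∂μ := by
  rw [Measure.integral_comp_smul μ (fun x => f (x + v)) R, integral_add_right_eq_self]

namespace SchwartzMap

variable {E F : Type*} [NormedAddCommGroup E] [NormedSpace ℝ E] [NormedAddCommGroup F]
  [NormedSpace ℝ F]

theorem exists_norm_le_mul_one_add_norm_rpow_neg {G : Type*} [SeminormedAddCommGroup G]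
    (f : 𝓢(E, F)) (k : ℕ) {p : E → G} (hp : ∀ x, ‖p x‖ ≤ ‖x‖) :
    ∃ C, ∀ x, ‖f x‖ ≤ C * (1 + ‖p x‖) ^ (-(k : ℝ)) := by
  refine ⟨2 ^ k * (Finset.Iic (k, 0)).sup (fun m => SchwartzMap.seminorm ℝ m.1 m.2) f,
    fun x => ?_⟩
  have hf := one_add_le_sup_seminorm_apply (𝕜 := ℝ) (m := (k, 0)) le_rfl le_rfl f x
  rw [norm_iteratedFDeriv_zero] at hf
  rw [rpow_neg (by positivity), rpow_natCast, ← div_eq_mul_inv, le_div_iff₀ (by positivity)]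
  calc ‖f x‖ * (1 + ‖p x‖) ^ k ≤ ‖f x‖ * (1 + ‖x‖) ^ k := by gcongr; exact hp x
    _ ≤ _ := by rwa [mul_comm]

variable [MeasurableSpace E] [BorelSpace E]

theorem integrable_apply_prodMk [FiniteDimensional ℝ E] {D : Type*} [NormedAddCommGroup D]
    [NormedSpace ℝ D] (g : 𝓢(D × E, F)) (a : D) (μ : Measure E) [μ.IsAddHaarMeasure] :
    Integrable (fun y => g (a, y)) μ := by
  obtain ⟨C, hC⟩ := g.exists_norm_le_mul_one_add_norm_rpow_neg (Module.finrank ℝ E + 1)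
    (p := Prod.snd) norm_snd_le
  refine ((integrable_one_add_norm ?_).const_mul C).mono' (by fun_prop)
    (.of_forall fun y => hC (a, y))
  push_cast
  exact lt_add_one _

theorem integrable_apply_mul_prod {X : Type*} [MeasurableSpace X] {μ : Measure X} [SFinite μ]
    [SecondCountableTopology E] (g : 𝓢(ℝ × E, ℂ)) {f : X → ℂ} (hf : Integrable f μ)
    {φ : X × ℝ → E} (hφ : Measurable φ) :
    Integrable (fun p : X × ℝ => g (p.2, φ p) * f p.1) (μ.prod volume) := by
  obtain ⟨C, hC⟩ :=
    g.exists_norm_le_mul_one_add_norm_rpow_neg 2 (p := (Prod.fst : ℝ × E → ℝ)) norm_fst_le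
  have h_decay : Integrable (fun α : ℝ => C * (1 + ‖α‖) ^ (-((2 : ℕ) : ℝ))) :=
    (integrable_one_add_norm (by norm_num)).const_mul C
  refine (hf.norm.mul_prod h_decay).mono'
    ((g.continuous.measurable.comp (measurable_snd.prodMk hφ)).aestronglyMeasurable.mul
      hf.aestronglyMeasurable.comp_fst) (.of_forall fun p => ?_)
  rw [norm_mul, mul_comm ‖f p.1‖]
  exact mul_le_mul_of_nonneg_right (hC _) (norm_nonneg _)

end SchwartzMap

theorem integral_comp_mul_eq_integral_mul_photo {n : ℕ} (f : 𝓢(E2n n, ℂ)) {F : En n → ℂ}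
    (hF : Integrable F) (hFc : Continuous F) {C : ℝ} (hFC : ∀ y, ‖F y‖ ≤ C) {α : ℝ}
    (hα : α ≠ 0) :
    ∫ w : E2n n, F (α • w.fst + (1 - α) • w.snd) * f w = ∫ y, F y * photo n f α y := by
  set f' : En n → En n → ℂ := fun y u => f (WithLp.toLp 2 (α⁻¹ • y + (1 - α⁻¹) • u, u))
  have hf : Integrable (fun p : En n × En n => f (WithLp.toLp 2 p)) :=
    ((measurePreserving_toLp_E2n n).integrable_comp_emb
      (MeasurableEquiv.toLp 2 _).measurableEmbedding).2 f.integrable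
  have h_prod : Integrable (fun p : En n × En n =>
      F (α • p.1 + (1 - α) • p.2) * f (WithLp.toLp 2 p)) := by
    refine (hf.norm.const_mul C).mono' (by fun_prop) (.of_forall fun p => ?_)
    rw [norm_mul]
    exact mul_le_mul_of_nonneg_right (hFC _) (norm_nonneg _)
  have h_sheared : Integrable (Function.uncurry fun y u => F y * f' y u) := by
    obtain ⟨Cf, hCf⟩ := f.exists_norm_le_mul_one_add_norm_rpow_neg (n + 1)
      (p := fun w : E2n n => w.snd) (WithLp.norm_snd_le _)
    have h_decay : Integrable (fun u : En n => Cf * (1 + ‖u‖) ^ (-((n + 1 : ℕ) : ℝ))) :=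
      (integrable_one_add_norm (by simp)).const_mul Cf
    refine (hF.norm.mul_prod h_decay).mono' (by fun_prop) (.of_forall fun p => ?_)
    rw [Function.uncurry_apply_pair, norm_mul]
    exact mul_le_mul_of_nonneg_left (hCf _) (norm_nonneg _)
  have h_fiber (u : En n) : ∫ w, F (α • w + (1 - α) • u) * f (WithLp.toLp 2 (w, u)) =
      |(α ^ n)⁻¹| • ∫ y, F y * f' y u := by
    have h_scale := integral_comp_smul_add volume (fun y => F y * f' y u) α ((1 - α) • u)
    rw [finrank_euclideanSpace_fin] at h_scale
    have h_inv (w : En n) : α⁻¹ • (α • w + (1 - α) • u) + (1 - α⁻¹) • u = w := by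
      match_scalars
      · field_simp
      · field_simp; ring
    simp only [← h_scale, f', h_inv]
  calc ∫ w : E2n n, F (α • w.fst + (1 - α) • w.snd) * f w
      = ∫ u, ∫ w, F (α • w + (1 - α) • u) * f (WithLp.toLp 2 (w, u)) := by
        rw [← (measurePreserving_toLp_E2n n).integral_comp
          (MeasurableEquiv.toLp 2 _).measurableEmbedding]
        exact integral_prod_symm _ h_prod
    _ = |(α ^ n)⁻¹| • ∫ u, ∫ y, F y * f' y u := by
        simp_rw [h_fiber, integral_smul]
    _ = |(α ^ n)⁻¹| • ∫ y, F y * ∫ u, f' y u := by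
        rw [← integral_integral_swap h_sheared]
        simp_rw [integral_const_mul]
    _ = ∫ y, F y * photo n f α y := by
        simp only [photo, abs_inv, abs_pow, mul_smul_comm, integral_smul, f']

/-- convolution property of the dual photography transform:
`(P*g) * f = P*(g * Pf)`. -/
theorem photoDual_convolution (n : ℕ) (f : 𝓢(E2n n, ℂ)) (g : 𝓢(ℝ × En n, ℂ))
    (z : E2n n) :
    ∫ w : E2n n, photoDual n (fun α y => g (α, y)) (z - w) * f w =
      photoDual n
        (fun α y => ∫ y' : En n, g (α, y - y') * photo n (⇑f) α y') z := by
  set X : ℝ → En n := fun α => α • z.fst + (1 - α) • z.snd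
  have h_shift (α : ℝ) (w : E2n n) : α • (z - w).fst + (1 - α) • (z - w).snd =
      X α - (α • w.fst + (1 - α) • w.snd) := by
    simp only [X, WithLp.sub_fst, WithLp.sub_snd]
    module
  calc ∫ w : E2n n, photoDual n (fun α y => g (α, y)) (z - w) * f w
      = ∫ w : E2n n, ∫ α, g (α, X α - (α • w.fst + (1 - α) • w.snd)) * f w := by
        simp_rw [photoDual, ← integral_mul_const, h_shift]
    _ = ∫ α, ∫ w : E2n n, g (α, X α - (α • w.fst + (1 - α) • w.snd)) * f w :=
        integral_integral_swap (g.integrable_apply_mul_prod f.integrable (by fun_prop))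
    _ = ∫ α, ∫ y, g (α, X α - y) * photo n f α y := by
        refine integral_congr_ae ?_
        filter_upwards [Measure.ae_ne volume (0 : ℝ)] with α hα
        exact integral_comp_mul_eq_integral_mul_photo f
          ((g.integrable_apply_prodMk α volume).comp_sub_left (X α)) (by fun_prop)
          (fun _ => g.norm_le_seminorm ℝ _) hα
    _ = photoDual n (fun α y => ∫ y' : En n, g (α, y - y') * photo n (⇑f) α y') z := rfl
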